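/- The permutation ergodic averages on the Boolean algebra converge in norm to the conditional expectation E: for every compact operator k on H, every c ∈ ℂ and every ε > 0 there is a finite J₀ ⊆ ℤ such that for every finite J ⊆ ℤ with J₀ ⊆ J one has ‖(1/|J|!) Σ_{g ∈ P_J} U_g (k + c·1) U_g* − (⟨k e_#, e_#⟩·P_# + c·1)‖ < ε, where P_J is the group of permutations of ℤ fixing every element of ℤ∖J pointwise (so |P_J| = |J|!). -/

import Mathlib

/-!
Conjugation by the unitaries `U_g` is isometric and fixes `1`, so the averages
`A_J T = |J|!⁻¹ ∑_{g ∈ P_J} U_g T U_g*` are contractions with `A_J (c • 1) = c • 1`, and the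
operators `T` with `A_J T → ⟪e_#, T e_#⟫ P_#` form a closed subspace. It contains the matrix units
`|e_x⟩⟨e_y|`: `P_#` is fixed by every `U_g`, and if `y = b ∈ J` the averaged unit
`|J|!⁻¹ ∑_g |e_{g x}⟩⟨e_{g b}|` has norm at most `|J|^(-1/2)`, since `g b` is equidistributed
over `J` and `∑_{a ∈ J} |v_a| ≤ √|J| ‖v‖`; the units `|e_a⟩⟨e_#|` are adjoints of these.
Finally a compact `k` is the norm limit of `P_F k` for the coordinate projections `P_F`, and each
`P_F k` is a finite sum of operators `|e_x⟩⟨w|`, which lie in the closed span of the matrix units.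
-/

noncomputable section

/-- The Hilbert space `ℓ²({#} ∪ ℤ)`, with `#` encoded as `none : Option ℤ`. -/
abbrev BooleanSpace : Type := lp (fun _ : Option ℤ => ℂ) 2

/-- The canonical orthonormal basis vectors `e_x`, `x ∈ {#} ∪ ℤ`;
`e none` is the vacuum vector `e_#`. -/
def e (x : Option ℤ) : BooleanSpace := lp.single 2 x (1 : ℂ)

/-- The orthogonal projection `P_#` of `ℓ²({#} ∪ ℤ)` onto `ℂ e_#`. -/
def vacuumProjection : BooleanSpace →L[ℂ] BooleanSpace :=
  (innerSL ℂ (e none)).smulRight (e none)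

/-- `V` is the unitary of `ℓ²({#} ∪ ℤ)` implementing the permutation `g` of `ℤ`
(fixing the vacuum). -/
def ImplementsPerm (g : Equiv.Perm ℤ) (V : BooleanSpace →L[ℂ] BooleanSpace) : Prop :=
  V * ContinuousLinearMap.adjoint V = 1 ∧ ContinuousLinearMap.adjoint V * V = 1 ∧
    (∀ i : ℤ, V (e (some i)) = e (some (g i))) ∧ V (e none) = e none

/-- The permutation of `ℤ` obtained by extending a permutation of the finite set `J`
by the identity outside `J`; as `g` ranges over `Equiv.Perm J` these are exactly the
elements of the group `P_J` of permutations of `ℤ` fixing `ℤ ∖ J` pointwise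
(a group of cardinality `|J|!`). -/
def extendPerm (J : Finset ℤ) (g : Equiv.Perm {x : ℤ // x ∈ J}) : Equiv.Perm ℤ :=
  g.extendDomain (Equiv.refl _)

open Filter Topology InnerProductSpace

theorem Equiv.Perm.card_smul_sum_apply {α M : Type*} [Fintype α] [DecidableEq α]
    [AddCommMonoid M] (f : α → M) (a : α) :
    Fintype.card α • ∑ σ : Equiv.Perm α, f (σ a) = (Fintype.card α).factorial • ∑ x, f x := by
  have hindep (b : α) : ∑ σ : Equiv.Perm α, f (σ b) = ∑ σ : Equiv.Perm α, f (σ a) := by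
    simpa using Equiv.sum_comp (Equiv.mulRight (Equiv.swap a b)) fun σ => f (σ a)
  calc Fintype.card α • ∑ σ : Equiv.Perm α, f (σ a)
      = ∑ b, ∑ σ : Equiv.Perm α, f (σ b) := by simp [hindep]
    _ = ∑ σ : Equiv.Perm α, ∑ b, f (σ b) := Finset.sum_comm
    _ = (Fintype.card α).factorial • ∑ x, f x := by
      simp [Equiv.sum_comp, Fintype.card_perm]

theorem tendsto_of_mem_topologicalClosure_span {ι 𝕜 E F : Type*} [NontriviallyNormedField 𝕜]
    [NormedAddCommGroup E] [NormedSpace 𝕜 E] [NormedAddCommGroup F] [NormedSpace 𝕜 F]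
    {l : Filter ι} {L : ι → E →L[𝕜] F} {C : ℝ} (hL : ∀ i, ‖L i‖ ≤ C) (f : E →L[𝕜] F)
    {s : Set E} (hs : ∀ x ∈ s, Tendsto (fun i => L i x) l (𝓝 (f x)))
    {x : E} (hx : x ∈ (Submodule.span 𝕜 s).topologicalClosure) :
    Tendsto (fun i => L i x) l (𝓝 (f x)) := by
  let G : Submodule 𝕜 E :=
    { carrier := {x | Tendsto (fun i => L i x) l (𝓝 (f x))}
      add_mem' := fun ha hb => by simpa using ha.add hb
      zero_mem' := by simpa using tendsto_const_nhds
      smul_mem' := fun c _ hx => by simpa using hx.const_smul c }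
  have hL' : Equicontinuous fun i => ⇑(L i) :=
    ((NormedSpace.equicontinuous_TFAE L).out 5 1).mp (by exact ⟨C, hL⟩)
  exact Submodule.topologicalClosure_minimal _ ((Submodule.span_le (p := G)).mpr hs)
    (hL'.isClosed_setOfPred_tendsto f.continuous) hx

theorem IsCompactOperator.tendsto_comp {ι 𝕜 E F : Type*} [RCLike 𝕜] [NormedAddCommGroup E]
    [NormedSpace 𝕜 E] [NormedAddCommGroup F] [NormedSpace 𝕜 F] {l : Filter ι}
    {P : ι → E →L[𝕜] E} {C : ℝ} (hP : ∀ i, ‖P i‖ ≤ C)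
    (hPx : ∀ x, Tendsto (fun i => P i x) l (𝓝 x)) {k : F →L[𝕜] E} (hk : IsCompactOperator k) :
    Tendsto (fun i => P i ∘L k) l (𝓝 k) := by
  set K := closure (k '' Metric.closedBall 0 1)
  have : CompactSpace K := isCompact_iff_compactSpace.mp (hk.isCompact_closure_image_closedBall 1)
  have hP' : Equicontinuous fun i => ⇑(P i) :=
    ((NormedSpace.equicontinuous_TFAE P).out 5 1).mp (by exact ⟨C, hP⟩)
  have hequi : Equicontinuous (K.domRestrict ∘ fun i => ⇑(P i)) :=
    (equicontinuous_restrict_iff _).mpr (hP'.equicontinuousOn K)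
  have hunif : TendstoUniformly (fun i (y : K) => P i y) (fun y => y) l :=
    UniformFun.tendsto_iff_tendstoUniformly.mp <|
      (hequi.tendsto_uniformFun_iff_pi l _).mpr (tendsto_pi_nhds.mpr fun y => hPx y)
  rw [Metric.tendsto_nhds]
  intro ε hε
  filter_upwards [Metric.tendstoUniformly_iff.mp hunif (ε / 2) (half_pos hε)] with i hi
  rw [dist_eq_norm]
  refine lt_of_le_of_lt (ContinuousLinearMap.opNorm_le_of_unit_norm (half_pos hε).le
    fun x hx => ?_) (half_lt_self hε)
  have hkx : k x ∈ K := subset_closure ⟨x, by simp [hx], rfl⟩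
  simpa [dist_eq_norm'] using (hi ⟨k x, hkx⟩).le

section InnerProductSpace

variable {𝕜 E : Type*} [RCLike 𝕜] [NormedAddCommGroup E] [InnerProductSpace 𝕜 E]

theorem Orthonormal.norm_sum_inner_smul_le {ι : Type*} {v : ι → E} (hv : Orthonormal 𝕜 v)
    (s : Finset ι) (x : E) : ‖∑ i ∈ s, inner 𝕜 (v i) x • v i‖ ≤ ‖x‖ := by
  have hsq : ‖∑ i ∈ s, inner 𝕜 (v i) x • v i‖ ^ 2 = ∑ i ∈ s, ‖inner 𝕜 (v i) x‖ ^ 2 := by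
    rw [@norm_sq_eq_re_inner 𝕜, hv.inner_sum]
    simp only [RCLike.conj_mul, ← RCLike.ofReal_pow, map_sum, RCLike.ofReal_re]
  refine le_of_sq_le_sq ?_ (norm_nonneg x)
  exact hsq ▸ hv.sum_inner_products_le x

theorem Orthonormal.sum_norm_inner_le {α : Type*} [Fintype α] {v : α → E}
    (hv : Orthonormal 𝕜 v) (x : E) :
    ∑ a, ‖inner 𝕜 (v a) x‖ ≤ √(Fintype.card α) * ‖x‖ := by
  have hsq : (∑ a, ‖inner 𝕜 (v a) x‖) ^ 2 ≤ Fintype.card α * ‖x‖ ^ 2 :=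
    calc (∑ a, ‖inner 𝕜 (v a) x‖) ^ 2 ≤ Fintype.card α * ∑ a, ‖inner 𝕜 (v a) x‖ ^ 2 :=
          sq_sum_le_card_mul_sum_sq
      _ ≤ Fintype.card α * ‖x‖ ^ 2 := by gcongr; exact hv.sum_inner_products_le x
  rw [← Real.sqrt_sq (norm_nonneg x), ← Real.sqrt_mul (Nat.cast_nonneg _)]
  exact Real.le_sqrt_of_sq_le hsq

theorem norm_sum_rankOne_perm_apply_le {α : Type*} [Fintype α] [DecidableEq α] {v : α → E}
    (hv : Orthonormal 𝕜 v) {X : Equiv.Perm α → E} (hX : ∀ σ, ‖X σ‖ ≤ 1) (a : α) :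
    ‖∑ σ : Equiv.Perm α, rankOne 𝕜 (X σ) (v (σ a))‖ ≤
      (Fintype.card α).factorial / √(Fintype.card α) := by
  have hn : (0 : ℝ) < Fintype.card α := by exact_mod_cast Fintype.card_pos_iff.mpr ⟨a⟩
  refine ContinuousLinearMap.opNorm_le_bound _ (by positivity) fun w => ?_
  have havg := Equiv.Perm.card_smul_sum_apply (fun x => ‖inner 𝕜 (v x) w‖) a
  simp only [nsmul_eq_mul] at havg
  calc ‖(∑ σ : Equiv.Perm α, rankOne 𝕜 (X σ) (v (σ a))) w‖
      ≤ ∑ σ : Equiv.Perm α, ‖inner 𝕜 (v (σ a)) w‖ := by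
        rw [sum_apply]
        refine (norm_sum_le _ _).trans (Finset.sum_le_sum fun σ _ => ?_)
        rw [rankOne_apply, norm_smul]
        exact mul_le_of_le_one_right (norm_nonneg _) (hX σ)
    _ = (Fintype.card α).factorial / Fintype.card α * ∑ x, ‖inner 𝕜 (v x) w‖ := by
        field_simp
        linarith
    _ ≤ (Fintype.card α).factorial / Fintype.card α * (√(Fintype.card α) * ‖w‖) := by
        gcongr
        exact hv.sum_norm_inner_le w
    _ = (Fintype.card α).factorial / √(Fintype.card α) * ‖w‖ := by
        rw [← Real.div_sqrt (x := (Fintype.card α : ℝ))]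
        field_simp
        rw [Real.sq_sqrt hn.le]

variable {ι : Type*} (b : HilbertBasis ι 𝕜 E)

theorem HilbertBasis.rankOne_mem_topologicalClosure_span_rankOne (i : ι) (w : E) :
    rankOne 𝕜 (b i) w ∈ (Submodule.span 𝕜
      (Set.range fun p : ι × ι => rankOne 𝕜 (b p.1) (b p.2))).topologicalClosure := by
  have hsum := (rankOne 𝕜 (b i)).hasSum (b.hasSum_repr w)
  refine Submodule.isClosed_topologicalClosure _ |>.mem_of_tendsto hsum
    (Eventually.of_forall fun s => Submodule.sum_mem _ fun j _ => ?_)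
  rw [map_smulₛₗ]
  exact Submodule.smul_mem _ _ (Submodule.le_topologicalClosure _
    (Submodule.subset_span ⟨(i, j), rfl⟩))

theorem HilbertBasis.mem_topologicalClosure_span_rankOne [CompleteSpace E] {k : E →L[𝕜] E}
    (hk : IsCompactOperator k) :
    k ∈ (Submodule.span 𝕜
      (Set.range fun p : ι × ι => rankOne 𝕜 (b p.1) (b p.2))).topologicalClosure := by
  set P : Finset ι → E →L[𝕜] E := fun s => ∑ i ∈ s, rankOne 𝕜 (b i) (b i)
  have hPx (s : Finset ι) (x : E) : P s x = ∑ i ∈ s, inner 𝕜 (b i) x • b i := by simp [P]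
  have hP (s : Finset ι) : ‖P s‖ ≤ 1 :=
    ContinuousLinearMap.opNorm_le_bound _ zero_le_one fun x => by
      simpa only [hPx, one_mul] using b.orthonormal.norm_sum_inner_smul_le s x
  have hlim : Tendsto (fun s => P s ∘L k) atTop (𝓝 k) :=
    hk.tendsto_comp hP fun x => by
      simp only [hPx, ← b.repr_apply_apply]
      exact b.hasSum_repr x
  refine Submodule.isClosed_topologicalClosure _ |>.mem_of_tendsto hlim
    (Eventually.of_forall fun s => ?_)
  simp only [P, ContinuousLinearMap.finsetSum_comp, rankOne_comp]
  exact Submodule.sum_mem _ fun i _ => b.rankOne_mem_topologicalClosure_span_rankOne i _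

end InnerProductSpace

section Boolean

open ContinuousLinearMap

local notation "H" => BooleanSpace

theorem coe_default_hilbertBasis : ⇑(default : HilbertBasis (Option ℤ) ℂ H) = e := by
  funext x
  rw [← HilbertBasis.repr_symm_single]
  rfl

theorem orthonormal_e : Orthonormal ℂ e :=
  coe_default_hilbertBasis ▸ HilbertBasis.orthonormal _

def permAverage (U : Equiv.Perm ℤ → H →L[ℂ] H) (J : Finset ℤ) : (H →L[ℂ] H) →L[ℂ] H →L[ℂ] H :=
  (J.card.factorial : ℂ)⁻¹ • ∑ g : Equiv.Perm J,
    mulLeftRight ℂ (H →L[ℂ] H) (U (extendPerm J g)) (adjoint (U (extendPerm J g)))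

theorem permAverage_apply (U : Equiv.Perm ℤ → H →L[ℂ] H) (J : Finset ℤ) (T : H →L[ℂ] H) :
    permAverage U J T = (J.card.factorial : ℂ)⁻¹ •
      ∑ g : Equiv.Perm J, U (extendPerm J g) * T * adjoint (U (extendPerm J g)) := by
  simp [permAverage]

def vacuumCompression : (H →L[ℂ] H) →L[ℂ] H →L[ℂ] H :=
  ((innerSL ℂ (e none)).comp (apply ℂ H (e none))).smulRight vacuumProjection

theorem vacuumCompression_apply (T : H →L[ℂ] H) :
    vacuumCompression T = inner ℂ (e none) (T (e none)) • vacuumProjection :=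
  rfl

namespace ImplementsPerm

variable {g : Equiv.Perm ℤ} {V : H →L[ℂ] H}

theorem mem_unitary (hV : ImplementsPerm g V) : V ∈ unitary (H →L[ℂ] H) :=
  Unitary.mem_iff.mpr ⟨by simpa [star_eq_adjoint] using hV.2.1,
    by simpa [star_eq_adjoint] using hV.1⟩

theorem apply_e (hV : ImplementsPerm g V) (x : Option ℤ) : V (e x) = e (x.map g) := by
  cases x with
  | none => exact hV.2.2.2
  | some i => exact hV.2.2.1 i

theorem conj_rankOne (hV : ImplementsPerm g V) (x y : Option ℤ) :
    V * rankOne ℂ (e x) (e y) * adjoint V = rankOne ℂ (e (x.map g)) (e (y.map g)) := by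
  rw [mul_def, mul_def, comp_rankOne, rankOne_comp, adjoint_adjoint, hV.apply_e, hV.apply_e]

end ImplementsPerm

variable {U : Equiv.Perm ℤ → H →L[ℂ] H}

theorem norm_permAverage_le (hU : ∀ g, ImplementsPerm g (U g)) (J : Finset ℤ) :
    ‖permAverage U J‖ ≤ 1 := by
  refine opNorm_le_bound _ zero_le_one fun T => ?_
  have hconj (g : Equiv.Perm ℤ) : ‖U g * T * adjoint (U g)‖ = ‖T‖ := by
    rw [← star_eq_adjoint, CStarRing.norm_mul_mem_unitary _ (Unitary.star_mem (hU g).mem_unitary),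
      CStarRing.norm_mem_unitary_mul _ (hU g).mem_unitary]
  calc ‖permAverage U J T‖
      ≤ ‖(J.card.factorial : ℂ)⁻¹‖ * ∑ g : Equiv.Perm J, ‖T‖ := by
        rw [permAverage_apply, norm_smul]
        gcongr
        exact (norm_sum_le _ _).trans_eq (Finset.sum_congr rfl fun g _ => hconj _)
    _ = 1 * ‖T‖ := by
        simp [Fintype.card_perm, Nat.factorial_ne_zero]

theorem permAverage_eq_self {T : H →L[ℂ] H} (hT : ∀ g, U g * T * adjoint (U g) = T)
    (J : Finset ℤ) : permAverage U J T = T := by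
  simp only [permAverage_apply, hT, Finset.sum_const, Finset.card_univ,
    Fintype.card_perm, Fintype.card_coe, ← Nat.cast_smul_eq_nsmul ℂ, smul_smul]
  rw [inv_mul_cancel₀ (Nat.cast_ne_zero.mpr (Nat.factorial_ne_zero _)), one_smul]

theorem permAverage_adjoint (J : Finset ℤ) (T : H →L[ℂ] H) :
    permAverage U J (adjoint T) = adjoint (permAverage U J T) := by
  rw [permAverage_apply, permAverage_apply, map_smulₛₗ, map_sum]
  congr 1
  · simp
  · simp [mul_def, adjoint_comp, comp_assoc]

theorem permAverage_rankOne (hU : ∀ g, ImplementsPerm g (U g)) (J : Finset ℤ) (x y : Option ℤ) :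
    permAverage U J (rankOne ℂ (e x) (e y)) = (J.card.factorial : ℂ)⁻¹ •
      ∑ g : Equiv.Perm J, rankOne ℂ (e (x.map (extendPerm J g))) (e (y.map (extendPerm J g))) := by
  simp only [permAverage_apply, (hU _).conj_rankOne]

theorem extendPerm_apply_of_mem {J : Finset ℤ} (g : Equiv.Perm J) {b : ℤ} (hb : b ∈ J) :
    extendPerm J g b = g ⟨b, hb⟩ := by
  rw [extendPerm, Equiv.Perm.extendDomain_apply_subtype _ _ hb]
  rfl

theorem norm_permAverage_rankOne_some_le (hU : ∀ g, ImplementsPerm g (U g)) {J : Finset ℤ}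
    {b : ℤ} (hb : b ∈ J) (x : Option ℤ) :
    ‖permAverage U J (rankOne ℂ (e x) (e (some b)))‖ ≤ (√J.card)⁻¹ := by
  have hv : Orthonormal ℂ fun j : J => e (some j) :=
    orthonormal_e.comp _ ((Option.some_injective _).comp Subtype.val_injective)
  have hsum := norm_sum_rankOne_perm_apply_le hv (X := fun g => e (x.map (extendPerm J g)))
    (fun _ => (orthonormal_e.1 _).le) ⟨b, hb⟩
  rw [Fintype.card_coe] at hsum
  rw [permAverage_rankOne hU, norm_smul]
  simp_rw [Option.map_some, extendPerm_apply_of_mem _ hb]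
  calc ‖(J.card.factorial : ℂ)⁻¹‖ * _
      ≤ (J.card.factorial : ℝ)⁻¹ * (J.card.factorial / √J.card) := by
        rw [norm_inv, Complex.norm_natCast]
        gcongr
    _ = (√J.card)⁻¹ := by
        field_simp

theorem tendsto_permAverage_rankOne_some (hU : ∀ g, ImplementsPerm g (U g)) (x : Option ℤ)
    (b : ℤ) : Tendsto (fun J => permAverage U J (rankOne ℂ (e x) (e (some b)))) atTop (𝓝 0) := by
  refine squeeze_zero_norm' ((eventually_finset_mem_atTop b).mono fun J hb =>
    norm_permAverage_rankOne_some_le hU hb x) ?_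
  exact tendsto_inv_atTop_zero.comp <| Real.tendsto_sqrt_atTop.comp <|
    tendsto_natCast_atTop_atTop.comp tendsto_card_atTop_atTop

theorem tendsto_permAverage_rankOne (hU : ∀ g, ImplementsPerm g (U g)) (x y : Option ℤ) :
    Tendsto (fun J => permAverage U J (rankOne ℂ (e x) (e y))) atTop
      (𝓝 (vacuumCompression (rankOne ℂ (e x) (e y)))) := by
  match x, y with
  | none, none =>
    have hfix (g : Equiv.Perm ℤ) : U g * rankOne ℂ (e none) (e none) * adjoint (U g) =
        rankOne ℂ (e none) (e none) := (hU g).conj_rankOne none none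
    have hvac : vacuumCompression (rankOne ℂ (e none) (e none)) = rankOne ℂ (e none) (e none) := by
      simp [vacuumCompression_apply, vacuumProjection, ← rankOne_def, orthonormal_e.1]
    simp_rw [permAverage_eq_self hfix, hvac]
    exact tendsto_const_nhds
  | x, some b =>
    have hzero : inner ℂ (e (some b)) (e none) = 0 := orthonormal_e.2 (by simp)
    simpa [vacuumCompression_apply, hzero] using tendsto_permAverage_rankOne_some hU x b
  | some a, none =>
    have hzero : inner ℂ (e none) (e (some a)) = 0 := orthonormal_e.2 (by simp)
    have hadj := (adjoint (𝕜 := ℂ) (E := H) (F := H)).continuous.tendsto 0 |>.comp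
      (tendsto_permAverage_rankOne_some hU none a)
    simpa [Function.comp_def, ← permAverage_adjoint, vacuumCompression_apply, hzero] using hadj

end Boolean

/-- the permutation ergodic averages on the Boolean algebra converge in
norm to the conditional expectation `E(k + c·1) = ⟨k e_#, e_#⟩ P_# + c·1`. -/
theorem boolean_permutation_averages
    (U : Equiv.Perm ℤ → BooleanSpace →L[ℂ] BooleanSpace)
    (hU : ∀ g : Equiv.Perm ℤ, ImplementsPerm g (U g))
    (k : BooleanSpace →L[ℂ] BooleanSpace) (hk : IsCompactOperator ⇑k) (c : ℂ)
    (ε : ℝ) (hε : 0 < ε) :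
    ∃ J₀ : Finset ℤ, ∀ J : Finset ℤ, J₀ ⊆ J →
      ‖((J.card.factorial : ℂ))⁻¹ •
          (∑ g : Equiv.Perm {x : ℤ // x ∈ J},
            U (extendPerm J g) * (k + c • 1) *
              ContinuousLinearMap.adjoint (U (extendPerm J g)))
        - ((inner ℂ (e none) (k (e none)) : ℂ) • vacuumProjection + c • 1)‖ < ε := by
  have hk_mem := HilbertBasis.mem_topologicalClosure_span_rankOne
    (default : HilbertBasis (Option ℤ) ℂ BooleanSpace) hk
  rw [coe_default_hilbertBasis] at hk_mem
  have hlim : Tendsto (fun J => permAverage U J k) atTop (𝓝 (vacuumCompression k)) :=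
    tendsto_of_mem_topologicalClosure_span (norm_permAverage_le hU) vacuumCompression
      (by rintro _ ⟨⟨x, y⟩, rfl⟩; exact tendsto_permAverage_rankOne hU x y) hk_mem
  obtain ⟨J₀, hJ₀⟩ := Metric.tendsto_atTop.mp hlim ε hε
  refine ⟨J₀, fun J hJ => ?_⟩
  have hscalar : permAverage U J (c • 1) = c • 1 := by
    rw [map_smul, permAverage_eq_self fun g => by rw [mul_one, (hU g).1]]
  rw [← permAverage_apply, map_add, hscalar, ← vacuumCompression_apply, add_sub_add_right_eq_sub,
    ← dist_eq_norm]
  exact hJ₀ J hJ
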